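/- arXiv:1310.6348 — 4 statements merged into one kernel-verified Lean document; each statement's English description precedes it below -/
import Mathlib

section
/- For all integers n ≥ 0, m ≥ 0 and 0 < q < 1, the q-shifted factorial satisfies |(q^{-m}; q)_n · q^{nm}| ≤ q^{n(n-1)/2}. -/
/-! Multiplying by `q^{nm} = (q^m)^n` turns `(q^{-m}; q)_n` into `∏_{k<n} (q^m - q^k)`. If `n > m`
the factor `k = m` vanishes; otherwise `0 ≤ q^m ≤ q^k` gives `|q^m - q^k| ≤ q^k`, and
`∏_{k<n} q^k = q^{n(n-1)/2}`. -/

theorem Finset.prod_one_sub_inv_mul_mul_pow_card {ι K : Type*} [Field K] (s : Finset ι)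
    (f : ι → K) {x : K} (hx : x ≠ 0) :
    (∏ i ∈ s, (1 - x⁻¹ * f i)) * x ^ s.card = ∏ i ∈ s, (x - f i) := by
  rw [← Finset.prod_const, ← Finset.prod_mul_distrib]
  refine Finset.prod_congr rfl fun i _ => ?_
  field_simp

theorem abs_prod_range_pow_sub_pow_le {q : ℝ} (hq0 : 0 ≤ q) (hq1 : q ≤ 1) (n m : ℕ) :
    |∏ k ∈ Finset.range n, (q ^ m - q ^ k)| ≤ q ^ (n * (n - 1) / 2) := by
  rcases lt_or_ge m n with hmn | hnm
  · rw [Finset.prod_eq_zero (Finset.mem_range.mpr hmn) (sub_self _), abs_zero]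
    positivity
  · calc |∏ k ∈ Finset.range n, (q ^ m - q ^ k)|
        = ∏ k ∈ Finset.range n, |q ^ m - q ^ k| := Finset.abs_prod _ _
      _ ≤ ∏ k ∈ Finset.range n, q ^ k := by
        refine Finset.prod_le_prod (fun _ _ => abs_nonneg _) fun k hk => ?_
        have hkm : k ≤ m := (Finset.mem_range.mp hk).le.trans hnm
        exact abs_sub_le_of_nonneg_of_le (by positivity) (pow_le_pow_of_le_one hq0 hq1 hkm)
          (by positivity) le_rfl
      _ = q ^ (n * (n - 1) / 2) := by
        rw [Finset.prod_pow_eq_pow_sum, Finset.sum_range_id]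

/-- For integers n ≥ 0, m ≥ 0 and 0 < q < 1,
`|(q^{-m}; q)_n · q^{nm}| ≤ q^{n(n-1)/2}`. -/
theorem qPoch_neg_pow_bound (q : ℝ) (hq0 : 0 < q) (hq1 : q < 1) (n m : ℕ) :
    |(∏ k ∈ Finset.range n, (1 - q ^ (-(m : ℤ)) * q ^ k)) * q ^ (n * m)| ≤
      q ^ (n * (n - 1) / 2) := by
  have hqm : q ^ m ≠ 0 := pow_ne_zero _ hq0.ne'
  have hprod := Finset.prod_one_sub_inv_mul_mul_pow_card (Finset.range n) (q ^ ·) hqm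
  rw [Finset.card_range] at hprod
  rw [zpow_neg, zpow_natCast, pow_mul', hprod]
  exact abs_prod_range_pow_sub_pow_le hq0.le hq1.le n m
end

section
/- For every nonnegative integer n, every complex a and z, and 0 < q < 1, one has (q^{1-n};q)_∞ · ₁φ₁(a; q^{1-n}; q, z) = (-z)^n q^{n(n-1)/2} (a;q)_n (q^{1+n};q)_∞ · ₁φ₁(a q^n; q^{1+n}; q, q^n z), where both sides are interpreted via the absolutely convergent series Σ_k (a;q)_k (q^{1-n+k};q)_∞ / (q;q)_k · (-1)^k z^k q^{k(k-1)/2} on the left. -/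
open scoped BigOperators

/-- Finite q-shifted factorial `(a;q)_k`. -/
noncomputable def qPoch (a q : ℂ) (k : ℕ) : ℂ := ∏ j ∈ Finset.range k, (1 - a * q ^ j)

/-- Infinite q-shifted factorial `(a;q)_∞`. -/
noncomputable def qPochInf (a q : ℂ) : ℂ := ∏' j : ℕ, (1 - a * q ^ j)

/-- The basic hypergeometric series `₁φ₁(a; b; q, z)`. -/
noncomputable def phi11 (a b q z : ℂ) : ℂ :=
  ∑' k : ℕ, qPoch a q k / (qPoch b q k * qPoch q q k) *
    (-1) ^ k * q ^ (k * (k - 1) / 2) * z ^ k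

/-- `(q^{1-n};q)_∞ ₁φ₁(a; q^{1-n}; q, z)`, interpreted via the regularized series
`Σ_k (a;q)_k (q^{1-n+k};q)_∞ / (q;q)_k (-1)^k z^k q^{k(k-1)/2}`. -/
noncomputable def regPhi11 (a : ℂ) (n : ℤ) (q : ℝ) (z : ℂ) : ℂ :=
  ∑' k : ℕ, qPoch a q k * qPochInf ((q : ℂ) ^ (1 - n + (k : ℤ))) q / qPoch q q k *
    (-1) ^ k * z ^ k * (q : ℂ) ^ (k * (k - 1) / 2)

/-!
For `k < n` the factor `(q^{1-n+k};q)_∞` contains `1 - q^{1-n+k} q^{n-1-k} = 0`, so the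
regularized series starts at `k = n`. Writing `k = m + n`, the splittings
`(a;q)_{m+n} = (a;q)_n (aq^n;q)_m`, `binom(m+n, 2) = binom(n, 2) + nm + binom(m, 2)` and
`(q^{1+m};q)_∞ / (q;q)_{m+n} = (q^{1+n};q)_∞ / ((q^{1+n};q)_m (q;q)_m)` (both sides equal
`(q;q)_∞ / ((q;q)_m (q;q)_{m+n})`) turn the `k`-th term into the `m`-th term of the
right-hand side.
-/

theorem Nat.choose_two_add (m n : ℕ) : (m + n).choose 2 = m.choose 2 + m * n + n.choose 2 := by
  induction n with
  | zero => simp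
  | succ n ih =>
    rw [← add_assoc, Nat.choose_succ_succ', ih, Nat.choose_succ_succ' n, Nat.choose_one_right,
      Nat.choose_one_right]
    ring

theorem tsum_eq_tsum_nat_add_of_eq_zero {α : Type*} [AddCommMonoid α] [TopologicalSpace α]
    {f : ℕ → α} (n : ℕ) (hf : ∀ k < n, f k = 0) : ∑' k, f k = ∑' m, f (m + n) := by
  refine ((add_left_injective n).tsum_eq fun k hk => ?_).symm
  exact ⟨k - n, Nat.sub_add_cancel (not_lt.mp fun h => hk (hf k h))⟩

theorem qPoch_add (a q : ℂ) (m n : ℕ) :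
    qPoch a q (m + n) = qPoch a q m * qPoch (a * q ^ m) q n := by
  simp only [qPoch, Finset.prod_range_add, pow_add, mul_assoc]

theorem qPoch_ne_zero {a q : ℂ} (ha : ‖a‖ < 1) (hq : ‖q‖ ≤ 1) (n : ℕ) :
    qPoch a q n ≠ 0 := by
  refine Finset.prod_ne_zero_iff.mpr fun j _ => sub_ne_zero.mpr fun h => ?_
  have : ‖a * q ^ j‖ < 1 := by
    rw [norm_mul, norm_pow]
    exact (mul_le_of_le_one_right (norm_nonneg a) (pow_le_one₀ (norm_nonneg q) hq)).trans_lt ha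
  simp [← h] at this

theorem multipliable_one_sub_mul_pow {q : ℂ} (hq : ‖q‖ < 1) (a : ℂ) :
    Multipliable fun j : ℕ => 1 - a * q ^ j := by
  simp_rw [sub_eq_add_neg]
  refine multipliable_one_add_of_summable ?_
  simpa [norm_mul, norm_pow] using
    (summable_geometric_of_lt_one (norm_nonneg q) hq).mul_left ‖a‖

theorem qPochInf_eq_qPoch_mul_qPochInf {q : ℂ} (hq : ‖q‖ < 1) (a : ℂ) (n : ℕ) :
    qPochInf a q = qPoch a q n * qPochInf (a * q ^ n) q := by
  have hshift : Multipliable fun j : ℕ => 1 - a * q ^ (j + n) :=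
    (multipliable_one_sub_mul_pow hq (a * q ^ n)).congr fun j => by ring
  rw [qPochInf, qPochInf, qPoch,
    ← Multipliable.prod_mul_tprod_nat_mul' (f := fun j => 1 - a * q ^ j) (k := n) hshift]
  congr 2 with j
  ring

theorem qPochInf_eq_zero_of_mul_pow_eq_one {a q : ℂ} {j : ℕ} (h : a * q ^ j = 1) :
    qPochInf a q = 0 :=
  tprod_of_exists_eq_zero ⟨j, sub_eq_zero.mpr h.symm⟩

theorem qPochInf_zpow_eq_zero {q : ℂ} (hq : q ≠ 0) {n k : ℕ} (hk : k < n) :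
    qPochInf (q ^ (1 - n + k : ℤ)) q = 0 := by
  refine qPochInf_eq_zero_of_mul_pow_eq_one (j := n - 1 - k) ?_
  rw [← zpow_natCast, ← zpow_add₀ hq, ← zpow_zero q]
  congr 1
  omega

theorem qPochInf_pow_div_qPoch_add {q : ℂ} (hq : ‖q‖ < 1) (m n : ℕ) :
    qPochInf (q ^ (1 + m)) q / qPoch q q (m + n) =
      qPochInf (q ^ (1 + n)) q / (qPoch (q ^ (1 + n)) q m * qPoch q q m) := by
  have hqn : ‖q ^ (1 + n)‖ < 1 := by
    rw [norm_pow]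
    exact pow_lt_one₀ (norm_nonneg q) hq (by omega)
  rw [div_eq_div_iff (qPoch_ne_zero hq hq.le _)
      (mul_ne_zero (qPoch_ne_zero hqn hq.le _) (qPoch_ne_zero hq hq.le _)),
    qPochInf_eq_qPoch_mul_qPochInf hq (q ^ (1 + m)) n,
    qPochInf_eq_qPoch_mul_qPochInf hq (q ^ (1 + n)) m, qPoch_add, ← pow_add, ← pow_add,
    ← pow_succ', add_comm m 1, add_right_comm 1 n m]
  ring

theorem regPhi11_term_shift {q : ℂ} (hq : ‖q‖ < 1) (a z : ℂ) (n m : ℕ) :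
    qPoch a q (m + n) * qPochInf (q ^ (1 - n + ((m + n : ℕ) : ℤ))) q / qPoch q q (m + n) *
        (-1) ^ (m + n) * z ^ (m + n) * q ^ ((m + n) * (m + n - 1) / 2) =
      (-z) ^ n * q ^ (n * (n - 1) / 2) * qPoch a q n * qPochInf (q ^ (1 + n)) q *
        (qPoch (a * q ^ n) q m / (qPoch (q ^ (1 + n)) q m * qPoch q q m) *
          (-1) ^ m * q ^ (m * (m - 1) / 2) * (q ^ n * z) ^ m) := by
  have hexp : (1 - n + ((m + n : ℕ) : ℤ)) = ((1 + m : ℕ) : ℤ) := by push_cast; ring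
  rw [hexp, zpow_natCast, mul_div_assoc, qPochInf_pow_div_qPoch_add hq, add_comm m n, qPoch_add]
  simp only [← Nat.choose_two_right, Nat.choose_two_add, pow_add, pow_mul]
  ring

/-- for n ≥ 0,
`(q^{1-n};q)_∞ ₁φ₁(a;q^{1-n};q,z)
  = (-z)^n q^{n(n-1)/2} (a;q)_n (q^{1+n};q)_∞ ₁φ₁(aq^n; q^{1+n}; q, q^n z)`. -/
theorem regPhi11_shift (q : ℝ) (hq0 : 0 < q) (hq1 : q < 1) (n : ℕ) (a z : ℂ) :
    regPhi11 a (n : ℤ) q z =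
      (-z) ^ n * (q : ℂ) ^ (n * (n - 1) / 2) * qPoch a q n *
        qPochInf ((q : ℂ) ^ (1 + n)) q *
        phi11 (a * (q : ℂ) ^ n) ((q : ℂ) ^ (1 + n)) q ((q : ℂ) ^ n * z) := by
  have hq : ‖(q : ℂ)‖ < 1 := by
    rw [Complex.norm_real, Real.norm_eq_abs, abs_lt]
    constructor <;> linarith
  have hq_ne : (q : ℂ) ≠ 0 := by exact_mod_cast hq0.ne'
  rw [regPhi11, phi11, ← tsum_mul_left, tsum_eq_tsum_nat_add_of_eq_zero n fun k hk => by
    simp [qPochInf_zpow_eq_zero hq_ne hk]]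
  exact tsum_congr fun m => regPhi11_term_shift hq a z n m
end

section
/- For 0 < q < 1, α > -1 and β > -1, the little q-Jacobi polynomials satisfy the pointwise limit lim_{n→∞} p_n(q^n x; q^α, q^β; q) = j_α(x; q) for every complex x, where the convergence is uniform on compact subsets of ℂ. -/
/-!
After the substitution `x ↦ q^n x`, the identity
`(q^{-n}; q)_k q^{nk} = (-1)^k q^{k(k-1)/2} ∏_{j<k} (1 - q^{n-j})` exhibits the `k`-th coefficient
`c_{n,k}` of `p_n(q^n x)` as the `k`-th coefficient `b_k` of `j_α(x)` times a factor that tends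
to `1` as `n → ∞` and is bounded by `(1 + q^{α+β+1})^k`. Since `|b_k| ≤ q^{k(k-1)/2} C^k`,
dominated convergence for series (Tannery's theorem) makes `∑_k |c_{n,k} - b_k| R^k` tend to `0`,
and this bounds the error uniformly on the disc of radius `R`.
-/

open scoped BigOperators

/-- Little q-Jacobi polynomial `p_n(x; q^α, q^β; q)`. -/
noncomputable def littleQJacobi (n : ℕ) (α β q : ℝ) (x : ℂ) : ℂ :=
  ∑ k ∈ Finset.range (n + 1),
    qPoch ((q : ℂ) ^ (-(n : ℤ))) q k * qPoch ((q : ℂ) ^ ((α + β + n + 1 : ℝ) : ℂ)) q k /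
      (qPoch ((q : ℂ) ^ ((α + 1 : ℝ) : ℂ)) q k * qPoch q q k) * x ^ k

/-- Normalized little q-Bessel function `j_α(x;q) = ₁φ₁(0; q^{α+1}; q, x)`. -/
noncomputable def littleQBessel (α q : ℝ) (x : ℂ) : ℂ :=
  ∑' k : ℕ, (-1) ^ k * (q : ℂ) ^ (k * (k - 1) / 2) * x ^ k /
    (qPoch ((q : ℂ) ^ ((α + 1 : ℝ) : ℂ)) q k * qPoch q q k)

open Finset Filter Topology Metric

section Tannery

variable {𝕜 : Type*} [NormedField 𝕜] [CompleteSpace 𝕜]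

theorem norm_tsum_mul_pow_sub_tsum_mul_pow_le {a b : ℕ → 𝕜} {R : ℝ} {x : 𝕜} (hx : ‖x‖ ≤ R)
    (ha : Summable fun k => ‖a k‖ * R ^ k) (hb : Summable fun k => ‖b k‖ * R ^ k) :
    ‖∑' k, a k * x ^ k - ∑' k, b k * x ^ k‖ ≤ ∑' k, ‖a k - b k‖ * R ^ k := by
  have hR : 0 ≤ R := (norm_nonneg x).trans hx
  have hterm (c : 𝕜) (k : ℕ) : ‖c * x ^ k‖ ≤ ‖c‖ * R ^ k := by
    rw [norm_mul, norm_pow]; gcongr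
  have hsummable (c : ℕ → 𝕜) (hc : Summable fun k => ‖c k‖ * R ^ k) :
      Summable fun k => c k * x ^ k :=
    hc.of_norm_bounded fun k => hterm (c k) k
  have hdiff : Summable fun k => ‖a k - b k‖ * R ^ k :=
    (ha.add hb).of_nonneg_of_le (fun k => by positivity) fun k => by
      rw [← add_mul]; gcongr; exact norm_sub_le _ _
  rw [← (hsummable a ha).tsum_sub (hsummable b hb)]
  exact tsum_of_norm_bounded hdiff.hasSum fun k => by rw [← sub_mul]; exact hterm _ k

theorem tendstoUniformlyOn_tsum_mul_pow_of_tendsto {ι : Type*} {l : Filter ι} [l.NeBot]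
    {a : ι → ℕ → 𝕜} {b : ℕ → 𝕜} {M : ℕ → ℝ} {R : ℝ} (hR : 0 ≤ R)
    (hM : Summable fun k => M k * R ^ k) (hbound : ∀ᶠ n in l, ∀ k, ‖a n k‖ ≤ M k)
    (hlim : ∀ k, Tendsto (fun n => a n k) l (𝓝 (b k))) :
    TendstoUniformlyOn (fun n x => ∑' k, a n k * x ^ k) (fun x => ∑' k, b k * x ^ k) l
      (closedBall 0 R) := by
  have hbM (k : ℕ) : ‖b k‖ ≤ M k :=
    le_of_tendsto (hlim k).norm (hbound.mono fun n hn => hn k)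
  have hsummable {c : ℕ → 𝕜} (hc : ∀ k, ‖c k‖ ≤ M k) : Summable fun k => ‖c k‖ * R ^ k :=
    hM.of_nonneg_of_le (fun k => by positivity) fun k => by gcongr; exact hc k
  have hsmall : Tendsto (fun n => ∑' k, ‖a n k - b k‖ * R ^ k) l (𝓝 0) := by
    have hdom := tendsto_tsum_of_dominated_convergence (hM.mul_left 2)
      (fun k => (((hlim k).sub_const (b k)).norm.mul_const (R ^ k)))
      (hbound.mono fun n hn k => by
        rw [norm_mul, norm_norm, norm_pow, Real.norm_of_nonneg hR, ← mul_assoc, two_mul]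
        gcongr
        exact (norm_sub_le _ _).trans (add_le_add (hn k) (hbM k)))
    simpa using hdom
  rw [Metric.tendstoUniformlyOn_iff]
  intro ε hε
  filter_upwards [hbound, hsmall.eventually (gt_mem_nhds hε)] with n hn hnε x hx
  rw [dist_comm, dist_eq_norm]
  exact (norm_tsum_mul_pow_sub_tsum_mul_pow_le (mem_closedBall_zero_iff.mp hx) (hsummable hn)
    (hsummable hbM)).trans_lt hnε

end Tannery

theorem pow_le_norm_qPoch {a q : ℂ} {r : ℝ} (ha : ‖a‖ ≤ r) (hr : r ≤ 1) (hq : ‖q‖ ≤ 1)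
    (k : ℕ) : (1 - r) ^ k ≤ ‖qPoch a q k‖ := by
  rw [qPoch, norm_prod, pow_eq_prod_const]
  refine prod_le_prod (fun _ _ => sub_nonneg.mpr hr) fun j _ => ?_
  calc 1 - r ≤ 1 - ‖a * q ^ j‖ := by
        rw [norm_mul, norm_pow]
        gcongr
        exact (mul_le_of_le_one_right (norm_nonneg a) (pow_le_one₀ (norm_nonneg q) hq)).trans ha
    _ ≤ ‖1 - a * q ^ j‖ := by simpa using norm_sub_norm_le (1 : ℂ) (a * q ^ j)

theorem norm_qPoch_le {a q : ℂ} {r : ℝ} (ha : ‖a‖ ≤ r) (hq : ‖q‖ ≤ 1) (k : ℕ) :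
    ‖qPoch a q k‖ ≤ (1 + r) ^ k := by
  rw [qPoch, norm_prod, pow_eq_prod_const]
  refine prod_le_prod (fun _ _ => norm_nonneg _) fun j _ => ?_
  calc ‖1 - a * q ^ j‖ ≤ ‖(1 : ℂ)‖ + ‖a * q ^ j‖ := norm_sub_le _ _
    _ ≤ 1 + r := by
        rw [norm_one, norm_mul, norm_pow]
        gcongr
        exact (mul_le_of_le_one_right (norm_nonneg a) (pow_le_one₀ (norm_nonneg q) hq)).trans ha

theorem continuous_qPoch (q : ℂ) (k : ℕ) : Continuous fun a => qPoch a q k := by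
  unfold qPoch; fun_prop

theorem qPoch_zero_left (q : ℂ) (k : ℕ) : qPoch 0 q k = 1 := by
  simp [qPoch]

theorem qPoch_zpow_neg_mul_pow {q : ℂ} (hq : q ≠ 0) {n k : ℕ} (hk : k ≤ n) :
    qPoch (q ^ (-(n : ℤ))) q k * (q ^ n) ^ k =
      (-1) ^ k * q ^ (k * (k - 1) / 2) * ∏ j ∈ range k, (1 - q ^ (n - j)) := by
  have hfactor (j : ℕ) (hj : j ∈ range k) :
      (1 - q ^ (-(n : ℤ)) * q ^ j) * q ^ n = -q ^ j * (1 - q ^ (n - j)) := by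
    have hqn : q ^ (-(n : ℤ)) * q ^ n = 1 := by
      rw [zpow_neg, zpow_natCast]; exact inv_mul_cancel₀ (pow_ne_zero _ hq)
    have hqj : q ^ j * q ^ (n - j) = q ^ n := by
      rw [← pow_add, Nat.add_sub_cancel' ((mem_range.mp hj).le.trans hk)]
    linear_combination (-q ^ j) * hqn - hqj
  rw [qPoch, pow_eq_prod_const, ← prod_mul_distrib, prod_congr rfl hfactor, prod_mul_distrib,
    prod_neg, prod_pow_eq_pow_sum, sum_range_id, card_range]

theorem summable_pow_choose_two_mul_pow {q : ℝ} (hq0 : 0 ≤ q) (hq1 : q < 1) (A : ℝ) :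
    Summable fun k => q ^ k.choose 2 * A ^ k := by
  refine summable_of_ratio_norm_eventually_le (r := 1 / 2) (by norm_num) ?_
  have hratio : Tendsto (fun k => q ^ k * |A|) atTop (𝓝 0) := by
    simpa using (tendsto_pow_atTop_nhds_zero_of_lt_one hq0 hq1).mul_const |A|
  filter_upwards [hratio.eventually (ge_mem_nhds (by norm_num : (0 : ℝ) < 1 / 2))] with k hk
  rw [Nat.choose_succ_succ', Nat.choose_one_right, pow_add, pow_succ]
  calc ‖q ^ k * q ^ k.choose 2 * (A ^ k * A)‖ = ‖q ^ k.choose 2 * A ^ k‖ * (q ^ k * |A|) := by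
        simp only [norm_mul, norm_pow, Real.norm_eq_abs, abs_of_nonneg hq0]; ring
    _ ≤ 1 / 2 * ‖q ^ k.choose 2 * A ^ k‖ := by rw [mul_comm]; gcongr

section LittleQ

variable {α β q : ℝ}

noncomputable def littleQBesselCoeff (α q : ℝ) (k : ℕ) : ℂ :=
  (-1) ^ k * (q : ℂ) ^ (k * (k - 1) / 2) /
    (qPoch ((q : ℂ) ^ ((α + 1 : ℝ) : ℂ)) q k * qPoch q q k)

/-- Truncated subtraction makes the first product vanish for `k > n`, matching `deg p_n = n`. -/
noncomputable def littleQJacobiDamping (α β q : ℝ) (n k : ℕ) : ℂ :=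
  (∏ j ∈ range k, (1 - (q : ℂ) ^ (n - j))) * qPoch ((q : ℂ) ^ ((α + β + n + 1 : ℝ) : ℂ)) q k

theorem littleQBessel_eq_tsum (x : ℂ) :
    littleQBessel α q x = ∑' k, littleQBesselCoeff α q k * x ^ k := by
  simp only [littleQBessel, littleQBesselCoeff, div_mul_eq_mul_div]

theorem littleQJacobiDamping_of_lt {n k : ℕ} (h : n < k) :
    littleQJacobiDamping α β q n k = 0 := by
  rw [littleQJacobiDamping, prod_eq_zero (mem_range.mpr h) (by simp), zero_mul]

theorem littleQJacobi_pow_mul_eq_tsum (hq : q ≠ 0) (n : ℕ) (x : ℂ) :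
    littleQJacobi n α β q ((q : ℂ) ^ n * x) =
      ∑' k, littleQBesselCoeff α q k * littleQJacobiDamping α β q n k * x ^ k := by
  rw [tsum_eq_sum (s := range (n + 1)) fun k hk => by
    rw [littleQJacobiDamping_of_lt (by simpa using hk), mul_zero, zero_mul]]
  refine sum_congr rfl fun k hk => ?_
  have hkey := qPoch_zpow_neg_mul_pow (Complex.ofReal_ne_zero.mpr hq) (mem_range_succ_iff.mp hk)
  rw [littleQBesselCoeff, littleQJacobiDamping, mul_pow]
  linear_combination (qPoch ((q : ℂ) ^ ((α + β + n + 1 : ℝ) : ℂ)) q k * x ^ k /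
    (qPoch ((q : ℂ) ^ ((α + 1 : ℝ) : ℂ)) q k * qPoch q q k)) * hkey

theorem norm_littleQJacobiDamping_le (hq0 : 0 < q) (hq1 : q ≤ 1) (n k : ℕ) :
    ‖littleQJacobiDamping α β q n k‖ ≤ (1 + q ^ (α + β + 1)) ^ k := by
  have hq : ‖(q : ℂ)‖ ≤ 1 := by rwa [Complex.norm_of_nonneg hq0.le]
  have hfirst : ‖∏ j ∈ range k, (1 - (q : ℂ) ^ (n - j))‖ ≤ 1 := by
    rw [norm_prod]
    refine prod_le_one (fun _ _ => norm_nonneg _) fun j _ => ?_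
    have h0 : 0 ≤ q ^ (n - j) := by positivity
    have h1 : q ^ (n - j) ≤ 1 := pow_le_one₀ hq0.le hq1
    rw [← Complex.ofReal_pow, ← Complex.ofReal_one, ← Complex.ofReal_sub, Complex.norm_real,
      Real.norm_eq_abs, abs_le]
    constructor <;> linarith
  have hsecond : ‖(q : ℂ) ^ ((α + β + n + 1 : ℝ) : ℂ)‖ ≤ q ^ (α + β + 1) := by
    rw [Complex.norm_cpow_real, Complex.norm_of_nonneg hq0.le]
    exact Real.rpow_le_rpow_of_exponent_ge hq0 hq1 (by linarith [n.cast_nonneg (α := ℝ)])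
  rw [littleQJacobiDamping, norm_mul, ← one_mul ((1 + q ^ (α + β + 1)) ^ k)]
  exact mul_le_mul hfirst (norm_qPoch_le hsecond hq k) (norm_nonneg _) zero_le_one

theorem tendsto_littleQJacobiDamping (hq0 : 0 < q) (hq1 : q < 1) (k : ℕ) :
    Tendsto (fun n => littleQJacobiDamping α β q n k) atTop (𝓝 1) := by
  have hq : ‖(q : ℂ)‖ < 1 := by rwa [Complex.norm_of_nonneg hq0.le]
  have hfirst : Tendsto (fun n : ℕ => ∏ j ∈ range k, (1 - (q : ℂ) ^ (n - j))) atTop (𝓝 1) := by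
    rw [← prod_const_one (s := range k)]
    refine tendsto_finsetProd _ fun j _ => ?_
    simpa using (tendsto_pow_atTop_nhds_zero_of_norm_lt_one hq).comp (tendsto_sub_atTop_nat j)
      |>.const_sub 1
  have hpow : Tendsto (fun n : ℕ => (q : ℂ) ^ ((α + β + n + 1 : ℝ) : ℂ)) atTop (𝓝 0) := by
    rw [tendsto_zero_iff_norm_tendsto_zero]
    have hnorm (n : ℕ) : ‖(q : ℂ) ^ ((α + β + n + 1 : ℝ) : ℂ)‖ = q ^ (α + β + 1) * q ^ n := by
      rw [Complex.norm_cpow_real, Complex.norm_of_nonneg hq0.le, ← Real.rpow_natCast,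
        ← Real.rpow_add hq0]
      ring_nf
    simp only [hnorm]
    simpa using (tendsto_pow_atTop_nhds_zero_of_lt_one hq0.le hq1).const_mul (q ^ (α + β + 1))
  have hsecond := ((continuous_qPoch (q : ℂ) k).tendsto 0).comp hpow
  rw [qPoch_zero_left] at hsecond
  rw [← mul_one (1 : ℂ)]
  exact hfirst.mul hsecond

theorem norm_littleQBesselCoeff_le (hq0 : 0 < q) (hq1 : q < 1) (hα : -1 < α) (k : ℕ) :
    ‖littleQBesselCoeff α q k‖ ≤ q ^ k.choose 2 * (((1 - q ^ (α + 1)) * (1 - q))⁻¹) ^ k := by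
  have hqα : q ^ (α + 1) < 1 := Real.rpow_lt_one hq0.le hq1 (by linarith)
  have hq : ‖(q : ℂ)‖ = q := Complex.norm_of_nonneg hq0.le
  have hden : ((1 - q ^ (α + 1)) * (1 - q)) ^ k ≤
      ‖qPoch ((q : ℂ) ^ ((α + 1 : ℝ) : ℂ)) q k * qPoch q q k‖ := by
    rw [norm_mul, mul_pow]
    gcongr
    · exact pow_le_norm_qPoch (by rw [Complex.norm_cpow_real, hq]) hqα.le (hq.trans_le hq1.le) k
    · exact pow_le_norm_qPoch hq.le hq1.le (hq.trans_le hq1.le) k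
  have hden_pos : 0 < ((1 - q ^ (α + 1)) * (1 - q)) ^ k := by
    apply pow_pos; apply mul_pos <;> linarith
  rw [littleQBesselCoeff, norm_div, norm_mul, norm_pow, norm_pow, norm_neg, norm_one, one_pow,
    one_mul, hq, ← Nat.choose_two_right, inv_pow, ← div_eq_mul_inv]
  gcongr

theorem summable_norm_littleQBesselCoeff_mul_pow (hq0 : 0 < q) (hq1 : q < 1) (hα : -1 < α)
    (r : ℝ) : Summable fun k => ‖littleQBesselCoeff α q k‖ * r ^ k := by
  refine (summable_pow_choose_two_mul_pow hq0.le hq1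
    (((1 - q ^ (α + 1)) * (1 - q))⁻¹ * |r|)).of_norm_bounded fun k => ?_
  rw [norm_mul, norm_norm, norm_pow, Real.norm_eq_abs, mul_pow, ← mul_assoc]
  gcongr
  exact norm_littleQBesselCoeff_le hq0 hq1 hα k

theorem tendstoUniformlyOn_littleQJacobi_closedBall (hq0 : 0 < q) (hq1 : q < 1) (hα : -1 < α)
    {R : ℝ} (hR : 0 ≤ R) :
    TendstoUniformlyOn (fun (n : ℕ) (x : ℂ) => littleQJacobi n α β q ((q : ℂ) ^ n * x))
      (fun x => littleQBessel α q x) atTop (closedBall 0 R) := by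
  simp_rw [littleQJacobi_pow_mul_eq_tsum hq0.ne', littleQBessel_eq_tsum]
  refine tendstoUniformlyOn_tsum_mul_pow_of_tendsto hR
    (M := fun k => ‖littleQBesselCoeff α q k‖ * (1 + q ^ (α + β + 1)) ^ k) ?_
    (.of_forall fun n k => ?_) fun k => ?_
  · simpa only [mul_assoc, ← mul_pow] using
      summable_norm_littleQBesselCoeff_mul_pow hq0 hq1 hα ((1 + q ^ (α + β + 1)) * R)
  · rw [norm_mul]
    gcongr
    exact norm_littleQJacobiDamping_le hq0 hq1.le n k
  · simpa using (tendsto_littleQJacobiDamping hq0 hq1 k).const_mul (littleQBesselCoeff α q k)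

end LittleQ

theorem littleQJacobi_tendsto_bessel_general (q α β : ℝ) (hq0 : 0 < q) (hq1 : q < 1)
    (hα : -1 < α) :
    (∀ x : ℂ, Filter.Tendsto (fun n : ℕ => littleQJacobi n α β q ((q : ℂ) ^ n * x))
        Filter.atTop (nhds (littleQBessel α q x))) ∧
    ∀ K : Set ℂ, IsCompact K →
      TendstoUniformlyOn (fun (n : ℕ) (x : ℂ) => littleQJacobi n α β q ((q : ℂ) ^ n * x))
        (fun x => littleQBessel α q x) Filter.atTop K := by
  have hball (R : ℝ) (hR : 0 ≤ R) :=
    tendstoUniformlyOn_littleQJacobi_closedBall (β := β) hq0 hq1 hα hR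
  refine ⟨fun x => (hball ‖x‖ (norm_nonneg x)).tendsto_at (by simp), fun K hK => ?_⟩
  obtain ⟨r, hr⟩ := hK.isBounded.subset_closedBall 0
  exact (hball _ (le_max_right r 0)).mono
    (hr.trans (closedBall_subset_closedBall (le_max_left r 0)))

/-- `lim_{n→∞} p_n(q^n x; q^α, q^β; q) = j_α(x;q)`,
uniformly on compact subsets of ℂ. -/
theorem littleQJacobi_tendsto_bessel (q α β : ℝ) (hq0 : 0 < q) (hq1 : q < 1)
    (hα : -1 < α) (hβ : -1 < β) :
    (∀ x : ℂ, Filter.Tendsto (fun n : ℕ => littleQJacobi n α β q ((q : ℂ) ^ n * x))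
        Filter.atTop (nhds (littleQBessel α q x))) ∧
    ∀ K : Set ℂ, IsCompact K →
      TendstoUniformlyOn (fun (n : ℕ) (x : ℂ) => littleQJacobi n α β q ((q : ℂ) ^ n * x))
        (fun x => littleQBessel α q x) Filter.atTop K :=
  littleQJacobi_tendsto_bessel_general q α β hq0 hq1 hα
end

section
/- For 0 < q < 1, ν > 0, and integers x, y, z, the kernel Δ_ν(q^x, q^y, q^z; q) appearing in the product formula for normalized little q-Bessel functions satisfies the symmetry q^{(ν+1)x} Δ_ν(q^x, q^y, q^z; q) = q^{(ν+1)z} Δ_ν(q^z, q^y, q^x; q). -/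
open scoped BigOperators

/-- Finite q-shifted factorial (real). -/
noncomputable def rqPoch (a q : ℝ) (k : ℕ) : ℝ := ∏ j ∈ Finset.range k, (1 - a * q ^ j)

/-- Infinite q-shifted factorial (real). -/
noncomputable def rqPochInf (a q : ℝ) : ℝ := ∏' j : ℕ, (1 - a * q ^ j)

/-- q-shifted factorial with integer index:
`(a;q)_n` for `n ≥ 0` and `(a;q)_{-n} = 1/(aq^{-n};q)_n` for `n > 0`. -/
noncomputable def rqPochZ (a q : ℝ) (n : ℤ) : ℝ :=
  if 0 ≤ n then ∏ k ∈ Finset.range n.toNat, (1 - a * q ^ (k : ℤ))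
  else 1 / ∏ k ∈ Finset.range (-n).toNat, (1 - a * q ^ ((k : ℤ) + n))

/-- Regularized `(w;q)_∞ ₁φ₁(a; w; q, u)`, defined by the absolutely convergent series
`Σ_k (a;q)_k (wq^k;q)_∞ / (q;q)_k (-1)^k u^k q^{k(k-1)/2}` (cf. Proposition 2.1). -/
noncomputable def rFphi (a w q u : ℝ) : ℝ :=
  ∑' k : ℕ, rqPoch a q k * rqPochInf (w * q ^ k) q / rqPoch q q k *
    (-1) ^ k * u ^ k * q ^ (k * (k - 1) / 2)

/-- The kernel `Δ_ν(q^x, q^y, q^z; q)` of the product formula for the normalized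
little q-Bessel functions. -/
noncomputable def qBesselKernel (ν q : ℝ) (x y z : ℤ) : ℝ :=
  (1 - q ^ ν) / rqPochInf q q *
    ∑' N : ℤ,
      (rFphi (q ^ (1 + N + y - x - z)) (q ^ (1 + y - x)) q (q ^ (1 + z - x))) ^ 2 *
        q ^ (ν * ((N : ℝ) - (x : ℝ)) + (1 + (y : ℝ) - (x : ℝ)) * ((z : ℝ) - (x : ℝ))) /
        (rqPochZ q q (N - z) * rqPochZ (q ^ N) q⁻¹ x * rqPochInf (q ^ (N + 1)) q *
          rqPochInf (q ^ (1 + N + y - x - z)) q)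

/-! For `z ≤ x`, with `m = x - z`, the two kernels agree summand by summand. Iterating the
contiguous relations of the regularised `₁φ₁` in its argument and in its lower parameter gives
`rFphi a w q (q^(1-m)) = ∏_{k<m} (a - w q^k) · rFphi a (w q^m) q (q^(m+1))`, the paper's key
identity, which writes the `₁φ₁` of the `(x, z)` summand as that of the `(z, x)` summand times
`q^((1+y-x)m) ∏_{k<m} (q^(N-z) - q^k)`. The square of this product is `q^(m(m-1))` times the
ratio of the weights `(q;q)_{N-z} (q^N;q⁻¹)_x` and `(q;q)_{N-x} (q^N;q⁻¹)_z`, and the remaining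
powers of `q` cancel. -/

open Finset

namespace QBessel

variable {q : ℝ}

lemma rqPoch_pos {a : ℝ} (ha0 : 0 ≤ a) (ha1 : a < 1) (hq0 : 0 ≤ q) (hq1 : q ≤ 1) (k : ℕ) :
    0 < rqPoch a q k :=
  prod_pos fun j _ => by nlinarith [pow_le_one₀ hq0 hq1 (n := j), pow_nonneg hq0 j]

lemma one_sub_pow_le_rqPoch_self (hq0 : 0 ≤ q) (hq1 : q < 1) (k : ℕ) :
    (1 - q) ^ k ≤ rqPoch q q k := by
  calc (1 - q) ^ k = ∏ _j ∈ range k, (1 - q) := by simp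
    _ ≤ rqPoch q q k :=
      prod_le_prod (fun _ _ => by linarith) fun j _ => by
        nlinarith [pow_le_one₀ hq0 hq1.le (n := j)]

lemma abs_rqPoch_le (hq0 : 0 ≤ q) (hq1 : q ≤ 1) (a : ℝ) (k : ℕ) :
    |rqPoch a q k| ≤ (1 + |a|) ^ k := by
  rw [rqPoch, abs_prod]
  calc ∏ j ∈ range k, |1 - a * q ^ j| ≤ ∏ _j ∈ range k, (1 + |a|) :=
        prod_le_prod (fun _ _ => abs_nonneg _) fun j _ => by
          have hqj : |q ^ j| ≤ 1 := by rw [abs_pow, abs_of_nonneg hq0]; exact pow_le_one₀ hq0 hq1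
          calc |1 - a * q ^ j| ≤ |1| + |a| * |q ^ j| := (abs_sub _ _).trans_eq (by rw [abs_mul])
            _ ≤ 1 + |a| := by rw [abs_one]; nlinarith [abs_nonneg a]
    _ = (1 + |a|) ^ k := by simp

lemma rqPoch_add (a : ℝ) (n j : ℕ) :
    rqPoch a q (n + j) = rqPoch a q n * rqPoch (a * q ^ n) q j := by
  simp only [rqPoch, prod_range_add, pow_add, mul_assoc]

lemma rqPoch_succ (a : ℝ) (k : ℕ) : rqPoch a q (k + 1) = rqPoch a q k * (1 - a * q ^ k) :=
  prod_range_succ _ _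

lemma rqPoch_succ' (a : ℝ) (k : ℕ) : rqPoch a q (k + 1) = (1 - a) * rqPoch (a * q) q k := by
  rw [add_comm, rqPoch_add]
  simp [rqPoch]

lemma multipliable_one_sub_mul_pow (hq0 : 0 ≤ q) (hq1 : q < 1) (v : ℝ) :
    Multipliable fun j : ℕ => 1 - v * q ^ j := by
  simpa [sub_eq_add_neg] using
    Real.multipliable_one_add_of_summable ((summable_geometric_of_lt_one hq0 hq1).mul_left (-v))

lemma rqPochInf_eq_one_sub_mul (hq0 : 0 ≤ q) (hq1 : q < 1) (v : ℝ) :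
    rqPochInf v q = (1 - v) * rqPochInf (v * q) q := by
  have hshift : Multipliable fun j : ℕ => 1 - v * q ^ (j + 1) :=
    (multipliable_one_sub_mul_pow hq0 hq1 (v * q)).congr fun j => by ring
  rw [rqPochInf, rqPochInf, tprod_eq_zero_mul' (f := fun j : ℕ => 1 - v * q ^ j) hshift,
    pow_zero, mul_one]
  congr 1
  exact tprod_congr fun j => by ring

lemma abs_rqPochInf_le (hq0 : 0 ≤ q) (hq1 : q < 1) (v : ℝ) :
    |rqPochInf v q| ≤ Real.exp (|v| / (1 - q)) := by
  refine le_of_tendsto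
    (multipliable_one_sub_mul_pow hq0 hq1 v).hasProd.tendsto_prod_nat.abs
    (Filter.Eventually.of_forall fun n => ?_)
  calc |∏ j ∈ range n, (1 - v * q ^ j)| ≤ ∏ j ∈ range n, (1 + |v| * q ^ j) := by
        rw [abs_prod]
        refine prod_le_prod (fun _ _ => abs_nonneg _) fun j _ => ?_
        calc |1 - v * q ^ j| ≤ |1| + |v * q ^ j| := abs_sub _ _
          _ = 1 + |v| * q ^ j := by rw [abs_one, abs_mul, abs_pow, abs_of_nonneg hq0]
    _ ≤ Real.exp (∑ j ∈ range n, |v| * q ^ j) :=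
        Real.prod_one_add_le_exp_sum _ fun j => by positivity
    _ ≤ Real.exp (|v| / (1 - q)) := by
        rw [Real.exp_le_exp, ← mul_sum, ← mul_one_div, range_eq_Ico]
        gcongr
        simpa using geom_sum_Ico_le_of_lt_one (m := 0) (n := n) hq0 hq1

lemma succ_mul_pred_div_two (k : ℕ) : (k + 1) * (k + 1 - 1) / 2 = k * (k - 1) / 2 + k := by
  rcases k with _ | j
  · rfl
  simp only [Nat.add_sub_cancel]
  rw [show (j + 1 + 1) * (j + 1) = (j + 1) * j + (j + 1) * 2 by ring,
    Nat.add_mul_div_right _ _ two_pos]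

lemma summable_pow_mul_pow_triangle (hq0 : 0 ≤ q) (hq1 : q < 1) (r : ℝ) :
    Summable fun k : ℕ => r ^ k * q ^ (k * (k - 1) / 2) := by
  refine summable_of_ratio_norm_eventually_le (r := 1 / 2) (by norm_num) ?_
  have hsmall : ∀ᶠ k : ℕ in Filter.atTop, |r| * q ^ k ≤ 1 / 2 := by
    have := (tendsto_pow_atTop_nhds_zero_of_lt_one hq0 hq1).const_mul |r|
    rw [mul_zero] at this
    exact this.eventually_le_const (by norm_num)
  filter_upwards [hsmall] with k hk
  have hnorm : ‖r ^ (k + 1) * q ^ ((k + 1) * (k + 1 - 1) / 2)‖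
      = |r| * q ^ k * ‖r ^ k * q ^ (k * (k - 1) / 2)‖ := by
    simp only [Real.norm_eq_abs, abs_mul, abs_pow, abs_of_nonneg hq0, succ_mul_pred_div_two,
      pow_add, pow_succ]
    ring
  rw [hnorm]
  exact mul_le_mul_of_nonneg_right hk (norm_nonneg _)

noncomputable def rFphiTerm (a w q u : ℝ) (k : ℕ) : ℝ :=
  rqPoch a q k * rqPochInf (w * q ^ k) q / rqPoch q q k * (-1) ^ k * u ^ k * q ^ (k * (k - 1) / 2)

lemma rFphi_eq_tsum (a w q u : ℝ) : rFphi a w q u = ∑' k, rFphiTerm a w q u k := rfl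

lemma abs_rFphiTerm_le (hq0 : 0 ≤ q) (hq1 : q < 1) (a w u : ℝ) (k : ℕ) :
    |rFphiTerm a w q u k|
      ≤ Real.exp (|w| / (1 - q)) * ((1 + |a|) * |u| / (1 - q)) ^ k * q ^ (k * (k - 1) / 2) := by
  have hq : 0 < 1 - q := by linarith
  have hpoch := abs_rqPoch_le hq0 hq1.le a k
  have hinf : |rqPochInf (w * q ^ k) q| ≤ Real.exp (|w| / (1 - q)) := by
    refine (abs_rqPochInf_le hq0 hq1 _).trans (Real.exp_le_exp.2 ?_)
    rw [abs_mul, abs_pow, abs_of_nonneg hq0]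
    gcongr
    exact mul_le_of_le_one_right (abs_nonneg w) (pow_le_one₀ hq0 hq1.le)
  have hden : (1 - q) ^ k ≤ rqPoch q q k := one_sub_pow_le_rqPoch_self hq0 hq1 k
  have hpos : 0 < rqPoch q q k := (pow_pos hq k).trans_le hden
  rw [rFphiTerm, abs_mul, abs_mul, abs_mul, abs_div, abs_mul, abs_of_pos hpos, abs_pow, abs_pow,
    abs_neg, abs_one, one_pow, mul_one, abs_of_nonneg (pow_nonneg hq0 _)]
  calc |rqPoch a q k| * |rqPochInf (w * q ^ k) q| / rqPoch q q k * |u| ^ k * q ^ (k * (k - 1) / 2)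
      ≤ (1 + |a|) ^ k * Real.exp (|w| / (1 - q)) / (1 - q) ^ k * |u| ^ k
          * q ^ (k * (k - 1) / 2) := by gcongr
    _ = _ := by rw [div_pow, mul_pow]; ring

lemma summable_rFphiTerm (hq0 : 0 ≤ q) (hq1 : q < 1) (a w u : ℝ) :
    Summable (rFphiTerm a w q u) :=
  Summable.of_norm_bounded
    ((summable_pow_mul_pow_triangle hq0 hq1 _).mul_left (Real.exp (|w| / (1 - q))) |>.congr
      fun _ => (mul_assoc _ _ _).symm)
    (abs_rFphiTerm_le hq0 hq1 a w u)

lemma rFphi_contiguous_w (hq0 : 0 ≤ q) (hq1 : q < 1) (a w u : ℝ) :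
    rFphi a w q u = (1 - a) * rFphi (a * q) (w * q) q u + (a - w) * rFphi a (w * q) q (u * q) := by
  simp only [rFphi_eq_tsum]
  rw [← tsum_mul_left, ← tsum_mul_left, ← ((summable_rFphiTerm hq0 hq1 _ _ _).mul_left _).tsum_add
    ((summable_rFphiTerm hq0 hq1 _ _ _).mul_left _)]
  refine tsum_congr fun k => ?_
  have hinf : rqPochInf (w * q ^ k) q = (1 - w * q ^ k) * rqPochInf (w * q * q ^ k) q := by
    rw [rqPochInf_eq_one_sub_mul hq0 hq1, mul_right_comm]
  have hpoch : (1 - a) * rqPoch (a * q) q k = rqPoch a q k * (1 - a * q ^ k) := by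
    rw [← rqPoch_succ', rqPoch_succ]
  simp only [rFphiTerm, hinf]
  linear_combination -(rqPochInf (w * q * q ^ k) q / rqPoch q q k * (-1) ^ k * u ^ k
    * q ^ (k * (k - 1) / 2)) * hpoch

lemma rFphi_contiguous_u (hq0 : 0 ≤ q) (hq1 : q < 1) (a w u : ℝ) :
    rFphi a w q u = rFphi a w q (u * q) - u * (1 - a) * rFphi (a * q) (w * q) q (u * q) := by
  have hdiff := (summable_rFphiTerm hq0 hq1 a w u).sub (summable_rFphiTerm hq0 hq1 a w (u * q))
  have hshift : ∀ k, rFphiTerm a w q u (k + 1) - rFphiTerm a w q (u * q) (k + 1)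
      = -(u * (1 - a)) * rFphiTerm (a * q) (w * q) q (u * q) k := by
    intro k
    have hq : rqPoch q q k ≠ 0 := (rqPoch_pos hq0 hq1 hq0 hq1.le k).ne'
    have hqk : 1 - q * q ^ k ≠ 0 := by nlinarith [pow_le_one₀ hq0 hq1.le (n := k)]
    simp only [rFphiTerm, rqPoch_succ' a, rqPoch_succ q, succ_mul_pred_div_two, pow_succ,
      mul_assoc w]
    field_simp
    ring
  have hsum : ∑' k, (rFphiTerm a w q u k - rFphiTerm a w q (u * q) k)
      = -(u * (1 - a)) * ∑' k, rFphiTerm (a * q) (w * q) q (u * q) k := by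
    rw [hdiff.tsum_eq_zero_add, ← tsum_mul_left, tsum_congr hshift]
    simp [rFphiTerm]
  rw [(summable_rFphiTerm hq0 hq1 a w u).tsum_sub (summable_rFphiTerm hq0 hq1 a w (u * q))] at hsum
  simp only [rFphi_eq_tsum]
  linarith

lemma rFphi_zpow_one_sub (hq0 : 0 < q) (hq1 : q < 1) (a w : ℝ) (m : ℕ) :
    rFphi a w q (q ^ (1 - (m : ℤ)))
      = (∏ k ∈ range m, (a - w * q ^ k)) * rFphi a (w * q ^ m) q (q ^ (m + 1)) := by
  induction m generalizing a w with
  | zero => simp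
  | succ m ih =>
    have hq : q ≠ 0 := hq0.ne'
    have hu : q ^ (1 - ((m + 1 : ℕ) : ℤ)) * q = q ^ (1 - (m : ℤ)) := by
      rw [← zpow_add_one₀ hq]; push_cast; ring_nf
    have hu' : q ^ (1 - ((m + 1 : ℕ) : ℤ)) * q ^ m = 1 := by
      rw [← zpow_natCast, ← zpow_add₀ hq]; push_cast; ring_nf; exact zpow_zero q
    have hprod : ∏ k ∈ range m, (a * q - w * q * q ^ k) = q ^ m * ∏ k ∈ range m, (a - w * q ^ k) :=
      calc ∏ k ∈ range m, (a * q - w * q * q ^ k) = ∏ k ∈ range m, q * (a - w * q ^ k) :=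
            prod_congr rfl fun k _ => by ring
        _ = q ^ m * ∏ k ∈ range m, (a - w * q ^ k) := by
            rw [prod_mul_distrib, prod_const, card_range]
    rw [rFphi_contiguous_u hq0.le hq1, hu, ih, ih, hprod,
      rFphi_contiguous_w hq0.le hq1 a (w * q ^ m), prod_range_succ,
      show w * q ^ m * q = w * q ^ (m + 1) by ring, show w * q * q ^ m = w * q ^ (m + 1) by ring,
      ← pow_succ]
    linear_combination (-(1 - a) * (∏ k ∈ range m, (a - w * q ^ k))
      * rFphi (a * q) (w * q ^ (m + 1)) q (q ^ (m + 1))) * hu'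

lemma rqPochZ_natCast (a q : ℝ) (n : ℕ) : rqPochZ a q n = rqPoch a q n := by
  simp [rqPochZ, rqPoch]

lemma rqPochZ_self_of_neg (hq : q ≠ 0) {n : ℤ} (hn : n < 0) : rqPochZ q q n = 0 := by
  rw [rqPochZ, if_neg hn.not_ge, prod_eq_zero (i := (-n).toNat - 1) (mem_range.2 (by omega)),
    div_zero]
  rw [show (((-n).toNat - 1 : ℕ) : ℤ) + n = -1 by omega, zpow_neg_one, mul_inv_cancel₀ hq, sub_self]

lemma zpow_mul_inv_zpow (hq : q ≠ 0) {N e : ℤ} {n : ℕ} (h : N - e = n) :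
    q ^ N * q⁻¹ ^ e = q ^ n := by
  rw [inv_zpow', ← zpow_add₀ hq, ← sub_eq_add_neg, h, zpow_natCast]

lemma rqPochZ_inv_of_le_of_neg (hq : q ≠ 0) {N x : ℤ} (hx : x ≤ N) (hN : N < 0) :
    rqPochZ (q ^ N) q⁻¹ x = 0 := by
  rw [rqPochZ, if_neg (by omega), prod_eq_zero (i := (N - x).toNat) (mem_range.2 (by omega)),
    div_zero]
  rw [zpow_mul_inv_zpow hq (n := 0) (by omega), pow_zero, sub_self]

lemma prod_one_sub_pow_sub_eq_rqPoch (n j : ℕ) :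
    ∏ k ∈ range j, (1 - q ^ (n + j - k)) = rqPoch (q * q ^ n) q j := by
  rw [rqPoch, ← prod_range_reflect]
  refine prod_congr rfl fun k hk => ?_
  rw [mem_range] at hk
  rw [show n + j - (j - 1 - k) = 1 + n + k by omega, pow_add, pow_add, pow_one]

lemma rqPochZ_inv_mul_rqPoch (hq0 : 0 < q) (hq1 : q < 1) {N x : ℤ} (hN : 0 ≤ N) (hx : x ≤ N) :
    rqPochZ (q ^ N) q⁻¹ x * rqPoch q q (N - x).toNat = rqPoch q q N.toNat := by
  rcases le_or_gt 0 x with hx0 | hx0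
  · obtain ⟨j, rfl⟩ := Int.eq_ofNat_of_zero_le hx0
    obtain ⟨n, hn⟩ := Int.eq_ofNat_of_zero_le (sub_nonneg.2 hx)
    have hfactor : ∀ k ∈ range j, 1 - q ^ N * q⁻¹ ^ (k : ℤ) = 1 - q ^ (n + j - k) := by
      intro k hk
      rw [mem_range] at hk
      rw [zpow_mul_inv_zpow hq0.ne' (n := n + j - k) (by omega)]
    rw [rqPochZ, if_pos hx0, Int.toNat_natCast, prod_congr rfl hfactor,
      prod_one_sub_pow_sub_eq_rqPoch, hn, Int.toNat_natCast,
      show N.toNat = n + j by omega, rqPoch_add, mul_comm]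
  · obtain ⟨n, rfl⟩ := Int.eq_ofNat_of_zero_le hN
    obtain ⟨t, ht⟩ : ∃ t : ℕ, x = -t := ⟨(-x).toNat, by omega⟩
    have hfactor : ∀ k ∈ range t, 1 - q ^ (n : ℤ) * q⁻¹ ^ ((k : ℤ) + x) = 1 - q ^ (n + t - k) := by
      intro k hk
      rw [mem_range] at hk
      rw [zpow_mul_inv_zpow hq0.ne' (n := n + t - k) (by omega)]
    have hpos : 0 < rqPoch (q * q ^ n) q t :=
      rqPoch_pos (by positivity) (by nlinarith [pow_le_one₀ hq0.le hq1.le (n := n)]) hq0.le hq1.le t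
    rw [rqPochZ, if_neg (by omega), show (-x).toNat = t by omega, prod_congr rfl hfactor,
      prod_one_sub_pow_sub_eq_rqPoch, show ((n : ℤ) - x).toNat = n + t by omega, rqPoch_add,
      Int.toNat_natCast]
    field_simp

noncomputable def kernelPhi (q : ℝ) (x y z N : ℤ) : ℝ :=
  rFphi (q ^ (1 + N + y - x - z)) (q ^ (1 + y - x)) q (q ^ (1 + z - x))

noncomputable def kernelWeight (q : ℝ) (x z N : ℤ) : ℝ :=
  rqPochZ q q (N - z) * rqPochZ (q ^ N) q⁻¹ x

noncomputable def kernelSummand (ν q : ℝ) (x y z N : ℤ) : ℝ :=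
  kernelPhi q x y z N ^ 2
      * q ^ (ν * ((N : ℝ) - (x : ℝ)) + (1 + (y : ℝ) - (x : ℝ)) * ((z : ℝ) - (x : ℝ)))
    / (kernelWeight q x z N * rqPochInf (q ^ (N + 1)) q * rqPochInf (q ^ (1 + N + y - x - z)) q)

lemma qBesselKernel_eq_tsum (ν q : ℝ) (x y z : ℤ) :
    qBesselKernel ν q x y z = (1 - q ^ ν) / rqPochInf q q * ∑' N, kernelSummand ν q x y z N :=
  rfl

lemma sq_prod_mul_inv_kernelWeight (hq0 : 0 < q) (hq1 : q < 1) (z N : ℤ) (m : ℕ) :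
    (∏ k ∈ range m, (q ^ (N - z) - q ^ k)) ^ 2 * (kernelWeight q (z + m) z N)⁻¹
      = (∏ k ∈ range m, q ^ k) ^ 2 * (kernelWeight q z (z + m) N)⁻¹ := by
  have hq : q ≠ 0 := hq0.ne'
  -- Where the paper's `1 / (q;q)_{N-z}` or `1 / (q^N;q^{-1})_x` vanishes, the corresponding
  -- `rqPochZ` is the junk value `1 / 0 = 0`, and dividing by it gives `0` again.
  rcases lt_or_ge N z with hNz | hzN
  · simp [kernelWeight, rqPochZ_self_of_neg hq (by omega : N - z < 0),
      rqPochZ_self_of_neg hq (by omega : N - (z + m) < 0)]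
  rcases lt_or_ge N (z + m) with hNx | hxN
  · have hzero : ∏ k ∈ range m, (q ^ (N - z) - q ^ k) = 0 :=
      prod_eq_zero (i := (N - z).toNat) (mem_range.2 (by omega)) (by
        rw [← zpow_natCast, Int.toNat_of_nonneg (by omega), sub_self])
    simp [kernelWeight, hzero, rqPochZ_self_of_neg hq (by omega : N - (z + m) < 0)]
  rcases lt_or_ge N 0 with hN | hN
  · simp [kernelWeight, rqPochZ_inv_of_le_of_neg hq hxN hN,
      rqPochZ_inv_of_le_of_neg hq (by omega : z ≤ N) hN]
  obtain ⟨n, hn⟩ := Int.eq_ofNat_of_zero_le (by omega : 0 ≤ N - (z + m))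
  have hNz : N - z = (n + m : ℕ) := by push_cast; omega
  have hW₁ := rqPochZ_inv_mul_rqPoch hq0 hq1 hN hxN
  have hW₀ := rqPochZ_inv_mul_rqPoch hq0 hq1 hN (by omega : z ≤ N)
  rw [hn, Int.toNat_natCast] at hW₁
  rw [hNz, Int.toNat_natCast, rqPoch_add] at hW₀
  have hprod : (∏ k ∈ range m, (q ^ (N - z) - q ^ k)) ^ 2
      = (∏ k ∈ range m, q ^ k) ^ 2 * rqPoch (q * q ^ n) q m ^ 2 := by
    rw [← prod_one_sub_pow_sub_eq_rqPoch, ← mul_pow, ← prod_mul_distrib, ← prod_pow, ← prod_pow]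
    refine prod_congr rfl fun k hk => ?_
    rw [mem_range] at hk
    rw [hNz, zpow_natCast, show n + m = k + (n + m - k) by omega, pow_add, Nat.add_sub_cancel_left]
    ring
  have hP₀ := rqPoch_pos hq0.le hq1 hq0.le hq1.le n
  have hR := rqPoch_pos (a := q * q ^ n) (by positivity)
    (by nlinarith [pow_le_one₀ hq0.le hq1.le (n := n)]) hq0.le hq1.le m
  have hN' := rqPoch_pos hq0.le hq1 hq0.le hq1.le N.toNat
  rw [hprod, kernelWeight, kernelWeight, hNz, hn, rqPochZ_natCast, rqPochZ_natCast, rqPoch_add,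
    eq_div_of_mul_eq hP₀.ne' hW₁, eq_div_of_mul_eq (by positivity) hW₀]
  field_simp

lemma kernelPhi_eq (hq0 : 0 < q) (hq1 : q < 1) (y z N : ℤ) (m : ℕ) :
    kernelPhi q (z + m) y z N
      = (q ^ (1 + y - (z + m))) ^ m * (∏ k ∈ range m, (q ^ (N - z) - q ^ k))
        * kernelPhi q z y (z + m) N := by
  have hq : q ≠ 0 := hq0.ne'
  rw [kernelPhi, kernelPhi, show 1 + N + y - (z + m) - z = 1 + y - (z + m) + (N - z) by ring,
    show 1 + N + y - z - (z + m) = 1 + y - (z + m) + (N - z) by ring,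
    show 1 + y - z = 1 + y - (z + m) + m by ring, show 1 + z - (z + m) = 1 - (m : ℤ) by ring,
    show 1 + (z + m) - z = ((m + 1 : ℕ) : ℤ) by push_cast; ring, zpow_add₀ hq, zpow_add₀ hq,
    zpow_natCast, zpow_natCast, rFphi_zpow_one_sub hq0 hq1]
  simp_rw [← mul_sub]
  rw [prod_mul_distrib, prod_const, card_range]

lemma sq_prod_range_pow (hq0 : 0 < q) (m : ℕ) :
    (∏ k ∈ range m, q ^ k) ^ 2 = q ^ ((m : ℝ) * (m - 1)) := by
  induction m with
  | zero => simp
  | succ m ih =>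
    rw [prod_range_succ, mul_pow, ih, ← pow_mul, ← Real.rpow_natCast, ← Real.rpow_add hq0]
    push_cast
    ring_nf

lemma kernel_prefactor_eq (hq0 : 0 < q) (ν : ℝ) (y z N : ℤ) (m : ℕ) :
    q ^ ((ν + 1) * ((z + m : ℤ) : ℝ))
        * q ^ (ν * ((N : ℝ) - ((z + m : ℤ) : ℝ)) + (1 + (y : ℝ) - ((z + m : ℤ) : ℝ))
          * ((z : ℝ) - ((z + m : ℤ) : ℝ)))
        * ((q ^ (1 + y - (z + m))) ^ m) ^ 2 * (∏ k ∈ range m, q ^ k) ^ 2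
      = q ^ ((ν + 1) * (z : ℝ))
        * q ^ (ν * ((N : ℝ) - (z : ℝ))
          + (1 + (y : ℝ) - (z : ℝ)) * (((z + m : ℤ) : ℝ) - (z : ℝ))) := by
  rw [sq_prod_range_pow hq0, ← pow_mul, ← zpow_natCast, ← zpow_mul, ← Real.rpow_intCast,
    ← Real.rpow_add hq0, ← Real.rpow_add hq0, ← Real.rpow_add hq0, ← Real.rpow_add hq0]
  congr 1
  push_cast
  ring

lemma rpow_mul_kernel_summand_symm (hq0 : 0 < q) (hq1 : q < 1) (ν : ℝ) {x z : ℤ} (hzx : z ≤ x)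
    (y N : ℤ) :
    q ^ ((ν + 1) * (x : ℝ)) * kernelSummand ν q x y z N
      = q ^ ((ν + 1) * (z : ℝ)) * kernelSummand ν q z y x N := by
  obtain ⟨m, rfl⟩ : ∃ m : ℕ, x = z + m := ⟨(x - z).toNat, by omega⟩
  have hW := sq_prod_mul_inv_kernelWeight hq0 hq1 z N m
  have hE := kernel_prefactor_eq hq0 ν y z N m
  rw [kernelSummand, kernelSummand, show 1 + N + y - z - (z + m) = 1 + N + y - (z + m) - z by ring,
    kernelPhi_eq hq0 hq1]
  set F := kernelPhi q z y (z + m) N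
  set D := rqPochInf (q ^ (N + 1)) q * rqPochInf (q ^ (1 + N + y - (z + m) - z)) q
  linear_combination (q ^ ((ν + 1) * ((z + m : ℤ) : ℝ))
      * q ^ (ν * ((N : ℝ) - ((z + m : ℤ) : ℝ)) + (1 + (y : ℝ) - ((z + m : ℤ) : ℝ))
        * ((z : ℝ) - ((z + m : ℤ) : ℝ)))
      * ((q ^ (1 + y - (z + m))) ^ m) ^ 2 * F ^ 2 * D⁻¹) * hW
    + (F ^ 2 * D⁻¹ * (kernelWeight q z (z + m) N)⁻¹) * hE

lemma rpow_mul_qBesselKernel_symm_of_le (hq0 : 0 < q) (hq1 : q < 1) (ν : ℝ) {x z : ℤ}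
    (hzx : z ≤ x) (y : ℤ) :
    q ^ ((ν + 1) * (x : ℝ)) * qBesselKernel ν q x y z =
      q ^ ((ν + 1) * (z : ℝ)) * qBesselKernel ν q z y x := by
  rw [qBesselKernel_eq_tsum, qBesselKernel_eq_tsum, mul_left_comm _ ((1 - q ^ ν) / rqPochInf q q),
    mul_left_comm _ ((1 - q ^ ν) / rqPochInf q q)]
  congr 1
  rw [← tsum_mul_left, ← tsum_mul_left]
  exact tsum_congr fun N => rpow_mul_kernel_summand_symm hq0 hq1 ν hzx y N

end QBessel

theorem qBesselKernel_symm_xz_general (q ν : ℝ) (hq0 : 0 < q) (hq1 : q < 1)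
    (x y z : ℤ) :
    q ^ ((ν + 1) * (x : ℝ)) * qBesselKernel ν q x y z =
      q ^ ((ν + 1) * (z : ℝ)) * qBesselKernel ν q z y x := by
  rcases le_total z x with hzx | hxz
  · exact QBessel.rpow_mul_qBesselKernel_symm_of_le hq0 hq1 ν hzx y
  · exact (QBessel.rpow_mul_qBesselKernel_symm_of_le hq0 hq1 ν hxz y).symm

/-- `q^{(ν+1)x} Δ_ν(q^x,q^y,q^z;q) = q^{(ν+1)z} Δ_ν(q^z,q^y,q^x;q)`. -/
theorem qBesselKernel_symm_xz (q ν : ℝ) (hq0 : 0 < q) (hq1 : q < 1) (hν : 0 < ν)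
    (x y z : ℤ) :
    q ^ ((ν + 1) * (x : ℝ)) * qBesselKernel ν q x y z =
      q ^ ((ν + 1) * (z : ℝ)) * qBesselKernel ν q z y x :=
  qBesselKernel_symm_xz_general q ν hq0 hq1 x y z
end
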